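/- Let n ≥ 1 and let x_t, x_s, β ∈ ℝⁿ, α ∈ ℝ, σ_t, σ_s > 0. Let U_t = x_t'β + α + ε_t and U_s = x_s'β + α + ε_s, where ε_t ~ N(0, σ_t²) and ε_s ~ N(0, σ_s²) are independent. Then E[(U_t²U_s − U_s²U_t − U_tU_s·(x_t − x_s)'β − (U_s·σ_t² − U_t·σ_s²))·1{U_t>0, U_s>0}] = 0. -/

import Mathlib

open MeasureTheory

/-- Density of the normal distribution `N(μ, σ²)` on `ℝ`. -/
noncomputable def normalPDF (μ σ u : ℝ) : ℝ :=
  (1 / (σ * Real.sqrt (2 * Real.pi))) * Real.exp (-(u - μ) ^ 2 / (2 * σ ^ 2))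

/-!
Write `φ` for the `N(μ, σ²)` density. Differentiating `u φ(u)` gives
`(u φ(u))' = -(u² - uμ - σ²) φ(u) / σ²`, and `u φ(u)` vanishes at `0` and at `+∞`, so
`∫₀^∞ (u² - uμ - σ²) φ(u) du = 0` (Stein's identity for the test function `u ↦ u·1{u>0}`).
Since `(x_t - x_s)'β = μ_t - μ_s`, the integrand of the theorem splits as
`(u² - uμ_t - σ_t²) φ_t(u) · v φ_s(v) - u φ_t(u) · (v² - vμ_s - σ_s²) φ_s(v)`,
and by Fubini each product integrates over the quadrant to a product of one-dimensional
integrals, one factor of which vanishes.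
-/

section Factorization

variable {α β : Type*} [MeasurableSpace α] [MeasurableSpace β] {μ : Measure α} {ν : Measure β}
  [SFinite μ] [SFinite ν]

theorem setIntegral_prod_mul_sub_mul_eq_zero {f h : α → ℝ} {g k : β → ℝ} {s : Set α}
    {t : Set β} (hf : IntegrableOn f s μ) (hg : IntegrableOn g t ν) (hh : IntegrableOn h s μ)
    (hk : IntegrableOn k t ν) (hf₀ : ∫ x in s, f x ∂μ = 0) (hk₀ : ∫ y in t, k y ∂ν = 0) :
    ∫ z in s ×ˢ t, (f z.1 * g z.2 - h z.1 * k z.2) ∂μ.prod ν = 0 := by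
  have hfg : IntegrableOn (fun z : α × β => f z.1 * g z.2) (s ×ˢ t) (μ.prod ν) := by
    rw [IntegrableOn, ← Measure.prod_restrict]
    exact hf.mul_prod hg
  have hhk : IntegrableOn (fun z : α × β => h z.1 * k z.2) (s ×ˢ t) (μ.prod ν) := by
    rw [IntegrableOn, ← Measure.prod_restrict]
    exact hh.mul_prod hk
  rw [integral_sub hfg hhk, setIntegral_prod_mul, setIntegral_prod_mul, hf₀, hk₀]
  ring

end Factorization

section NormalPDF

variable {μ σ : ℝ}

theorem normalPDF_eq_mul_exp_neg_mul_sq (μ σ u : ℝ) :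
    normalPDF μ σ u
      = (σ * Real.sqrt (2 * Real.pi))⁻¹ * Real.exp (-(2 * σ ^ 2)⁻¹ * (u - μ) ^ 2) := by
  rw [normalPDF, one_div, neg_div, div_eq_inv_mul, neg_mul]

theorem integrable_sub_pow_mul_normalPDF (hσ : σ ≠ 0) (k : ℕ) :
    Integrable fun u => (u - μ) ^ k * normalPDF μ σ u := by
  have hb : 0 < (2 * σ ^ 2)⁻¹ := by positivity
  have h := integrable_rpow_mul_exp_neg_mul_sq hb (s := k) (by linarith [k.cast_nonneg (α := ℝ)])
  simp only [Real.rpow_natCast] at h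
  refine ((h.comp_sub_right μ).const_mul (σ * Real.sqrt (2 * Real.pi))⁻¹).congr
    (Filter.Eventually.of_forall fun u => ?_)
  simp only [normalPDF_eq_mul_exp_neg_mul_sq]
  ring

theorem integrable_mul_normalPDF (hσ : σ ≠ 0) : Integrable fun u => u * normalPDF μ σ u := by
  refine ((integrable_sub_pow_mul_normalPDF (μ := μ) hσ 1).add
    ((integrable_sub_pow_mul_normalPDF (μ := μ) hσ 0).const_mul μ)).congr
    (Filter.Eventually.of_forall fun u => ?_)
  simp only [Pi.add_apply]
  ring

theorem integrable_sq_sub_mul_sub_sq_mul_normalPDF (hσ : σ ≠ 0) :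
    Integrable fun u => (u ^ 2 - u * μ - σ ^ 2) * normalPDF μ σ u := by
  refine (((integrable_sub_pow_mul_normalPDF (μ := μ) hσ 2).add
    ((integrable_sub_pow_mul_normalPDF (μ := μ) hσ 1).const_mul μ)).sub
    ((integrable_sub_pow_mul_normalPDF (μ := μ) hσ 0).const_mul (σ ^ 2))).congr
    (Filter.Eventually.of_forall fun u => ?_)
  simp only [Pi.add_apply, Pi.sub_apply]
  ring

theorem hasDerivAt_normalPDF (μ σ u : ℝ) :
    HasDerivAt (normalPDF μ σ) (-(u - μ) / σ ^ 2 * normalPDF μ σ u) u := by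
  have hexp : HasDerivAt (fun u : ℝ => -(u - μ) ^ 2 / (2 * σ ^ 2)) (-(u - μ) / σ ^ 2) u := by
    rw [← mul_div_mul_left _ _ (two_ne_zero' ℝ), mul_neg]
    simpa using ((((hasDerivAt_id u).sub_const μ).pow 2).neg).div_const (2 * σ ^ 2)
  refine (hexp.exp.const_mul (1 / (σ * Real.sqrt (2 * Real.pi)))).congr_deriv ?_
  rw [normalPDF]
  ring
theorem hasDerivAt_mul_normalPDF (hσ : σ ≠ 0) (u : ℝ) :
    HasDerivAt (fun u => u * normalPDF μ σ u)
      (-((u ^ 2 - u * μ - σ ^ 2) * normalPDF μ σ u) / σ ^ 2) u := by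
  refine ((hasDerivAt_id u).mul (hasDerivAt_normalPDF μ σ u)).congr_deriv ?_
  rw [id]
  field_simp
  ring

theorem integral_Ioi_zero_sq_sub_mul_sub_sq_mul_normalPDF (hσ : σ ≠ 0) :
    ∫ u in Set.Ioi 0, (u ^ 2 - u * μ - σ ^ 2) * normalPDF μ σ u = 0 := by
  have hderiv := hasDerivAt_mul_normalPDF (μ := μ) hσ
  have hint : Integrable fun u => -((u ^ 2 - u * μ - σ ^ 2) * normalPDF μ σ u) / σ ^ 2 :=
    (integrable_sq_sub_mul_sub_sq_mul_normalPDF hσ).neg.div_const _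
  have hlim := tendsto_zero_of_hasDerivAt_of_integrableOn_Ioi (a := 0)
    (fun u _ => hderiv u) hint.integrableOn (integrable_mul_normalPDF hσ).integrableOn
  have h := integral_Ioi_of_hasDerivAt_of_tendsto' (a := 0) (fun u _ => hderiv u)
    hint.integrableOn hlim
  rw [integral_div, integral_neg, zero_mul, sub_zero, div_eq_zero_iff, neg_eq_zero] at h
  exact h.resolve_right (pow_ne_zero 2 hσ)

end NormalPDF

theorem panel_tobit_pairwise_moment (n : ℕ) (xt xs β : Fin n → ℝ) (α : ℝ)
    (σt σs : ℝ) (hσt : 0 < σt) (hσs : 0 < σs) :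
    ∫ p in Set.Ioi (0 : ℝ) ×ˢ Set.Ioi (0 : ℝ),
        (p.1 ^ 2 * p.2 - p.2 ^ 2 * p.1
            - p.1 * p.2 * (∑ i, (xt i - xs i) * β i)
            - (p.2 * σt ^ 2 - p.1 * σs ^ 2))
          * (normalPDF (∑ i, xt i * β i + α) σt p.1
              * normalPDF (∑ i, xs i * β i + α) σs p.2) = 0 := by
  set μt := ∑ i, xt i * β i + α
  set μs := ∑ i, xs i * β i + α
  have hmean : ∑ i, (xt i - xs i) * β i = μt - μs := by
    simp only [μt, μs, sub_mul, Finset.sum_sub_distrib]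
    ring
  have hsplit : ∀ p : ℝ × ℝ,
      (p.1 ^ 2 * p.2 - p.2 ^ 2 * p.1 - p.1 * p.2 * (∑ i, (xt i - xs i) * β i)
          - (p.2 * σt ^ 2 - p.1 * σs ^ 2)) * (normalPDF μt σt p.1 * normalPDF μs σs p.2)
        = (p.1 ^ 2 - p.1 * μt - σt ^ 2) * normalPDF μt σt p.1 * (p.2 * normalPDF μs σs p.2)
          - p.1 * normalPDF μt σt p.1 * ((p.2 ^ 2 - p.2 * μs - σs ^ 2) * normalPDF μs σs p.2) := by
    intro p
    rw [hmean]
    ring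
  simp_rw [hsplit, Measure.volume_eq_prod]
  exact setIntegral_prod_mul_sub_mul_eq_zero
    (integrable_sq_sub_mul_sub_sq_mul_normalPDF hσt.ne').integrableOn
    (integrable_mul_normalPDF hσs.ne').integrableOn (integrable_mul_normalPDF hσt.ne').integrableOn
    (integrable_sq_sub_mul_sub_sq_mul_normalPDF hσs.ne').integrableOn
    (integral_Ioi_zero_sq_sub_mul_sub_sq_mul_normalPDF hσt.ne')
    (integral_Ioi_zero_sq_sub_mul_sub_sq_mul_normalPDF hσs.ne')
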